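/- For the recursively defined balanced Merkle root over lists, appending data preserves the values at old indices: the i-th leaf of the tree over L is the i-th element of L, for every list L and every i < |L| (i.e., the tree faithfully stores the sequence, so proofs of presence at position i in an extension refer to the same data). -/

import Mathlib

/-- Binary Merkle trees storing data at the leaves. -/
inductive MTree (α : Type*) where
  | leaf (a : α) : MTree α
  | node (l r : MTree α) : MTree α

variable {α : Type*}

/-- Build the balanced Merkle tree over a list: a list of length `N ≥ 2` is
split into its first `⌈N/2⌉` elements and the rest. -/
def buildTree [Inhabited α] : List α → MTree α
  | [] => .leaf default
  | [a] => .leaf a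
  | a :: b :: rest =>
      .node (buildTree ((a :: b :: rest).take (((a :: b :: rest).length + 1) / 2)))
            (buildTree ((a :: b :: rest).drop (((a :: b :: rest).length + 1) / 2)))
termination_by l => l.length
decreasing_by
  all_goals simp [List.length_take, List.length_drop]; omega

/-- Number of leaves of a tree. -/
def leafCount : MTree α → ℕ
  | .leaf _ => 1
  | .node l r => leafCount l + leafCount r

/-- The `i`-th leaf of a tree, descending according to the subtree sizes. -/
def getLeaf : MTree α → ℕ → α
  | .leaf a, _ => a
  | .node l r, i => if i < leafCount l then getLeaf l i else getLeaf r (i - leafCount l)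

lemma leafCount_buildTree [Inhabited α] (L : List α) (h : L ≠ []) :
    leafCount (buildTree L) = L.length := by
  match L with
  | [a] => simp [buildTree, leafCount]
  | a :: b :: rest =>
    rw [buildTree]
    have h1 : ((a :: b :: rest).take (((a :: b :: rest).length + 1) / 2)) ≠ [] := by
      simp [List.take_eq_nil_iff]
    have h2 : ((a :: b :: rest).drop (((a :: b :: rest).length + 1) / 2)) ≠ [] := by
      simp [List.drop_eq_nil_iff]; omega
    have t1 : ((a :: b :: rest).take (((a :: b :: rest).length + 1) / 2)).length
        < (a :: b :: rest).length := by simp [List.length_take]; omega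
    have t2 : ((a :: b :: rest).drop (((a :: b :: rest).length + 1) / 2)).length
        < (a :: b :: rest).length := by simp [List.length_drop]; omega
    rw [leafCount, leafCount_buildTree _ h1, leafCount_buildTree _ h2]
    simp [List.length_take, List.length_drop]; omega
termination_by L.length

/-- The balanced Merkle tree faithfully stores the sequence: the `i`-th leaf of
the tree over `L` is the `i`-th element of `L`, for every `i < |L|`. -/
theorem merkle_tree_leaf_eq [Inhabited α] (L : List α) (i : ℕ) (hi : i < L.length) :
    getLeaf (buildTree L) i = L.get ⟨i, hi⟩ := by
  match L with
  | [a] =>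
    have : i = 0 := by simp at hi; omega
    subst this; simp [buildTree, getLeaf]
  | a :: b :: rest =>
    rw [buildTree, getLeaf]
    set k := ((a :: b :: rest).length + 1) / 2 with hk
    have hlen : (a :: b :: rest).length = rest.length + 2 := by simp
    have hkl : k < (a :: b :: rest).length := by omega
    have hkp : 0 < k := by omega
    have h1 : (a :: b :: rest).take k ≠ [] := by simp [List.take_eq_nil_iff]; omega
    have hlen1 : ((a :: b :: rest).take k).length = k := by simp [List.length_take]; omega
    rw [leafCount_buildTree _ h1, hlen1]
    by_cases hc : i < k
    · rw [if_pos hc]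
      rw [merkle_tree_leaf_eq ((a :: b :: rest).take k) i (by omega)]
      simp [List.getElem_take]
    · rw [if_neg hc]
      have hd : i - k < ((a :: b :: rest).drop k).length := by
        simp [List.length_drop]; omega
      rw [merkle_tree_leaf_eq ((a :: b :: rest).drop k) (i - k) hd]
      simp only [List.get_eq_getElem, List.getElem_drop]
      congr 1; omega
termination_by L.length
decreasing_by
  all_goals simp [List.length_take, List.length_drop]; omega
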